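/- Let λ = P + U_2 P^{−1} + U_3 P^{−2} + ⋯ be a Laurent series in P^{−1} with smooth coefficients satisfying the dKP hierarchy ∂_{T_n}λ = {(λ^n)_+, λ} for all n, and let φ(T) be a smooth function independent of P satisfying ∂_{T_n}φ = (λ^n)_+|_{P=φ_X} for all n, where (λ^n)_+|_{P=φ_X} is the polynomial part of λ^n evaluated at P = φ_X. Then μ := e^{−ad φ}λ satisfies the dmKP hierarchy ∂_{T_n}μ = {(μ^n)_{≥1}, μ} for all n. (This map λ ↦ e^{−ad φ}λ is the dispersionless Miura map between dKP and dmKP.) -/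

import Mathlib

namespace DMKP

/-- Coefficient functions of a formal Laurent series in `P⁻¹` with time variables
`T = (T₁, …, T_N)`: `A n` is the coefficient of `P^n`. -/
abbrev Coeffs (N : ℕ) := ℤ → (Fin N → ℝ) → ℝ

variable {N : ℕ}

/-- Partial derivative in the direction of the `q`-th time variable. -/
noncomputable def pd (q : Fin N) (f : (Fin N → ℝ) → ℝ) : (Fin N → ℝ) → ℝ :=
  fun x => fderiv ℝ f x (Pi.single q 1)

/-- Finitely many positive powers of `P`. -/
def BddPow (A : Coeffs N) : Prop := ∃ m : ℤ, ∀ n : ℤ, m < n → A n = 0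

/-- All coefficients are smooth functions of the time variables. -/
def SmoothCoeffs (A : Coeffs N) : Prop := ∀ n : ℤ, ContDiff ℝ (⊤ : ℕ∞) (A n)

/-- A Laurent series in `P⁻¹` with smooth coefficients. -/
def IsLaurent (A : Coeffs N) : Prop := BddPow A ∧ SmoothCoeffs A

/-- Termwise `∂_P`. -/
def dP (A : Coeffs N) : Coeffs N := fun n x => ((n + 1 : ℤ) : ℝ) * A (n + 1) x

/-- Termwise `∂_{T_q}`. -/
noncomputable def dT (q : Fin N) (A : Coeffs N) : Coeffs N := fun n => pd q (A n)

/-- Termwise `∂_X`, where `X = T₁`. -/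
noncomputable def dX [NeZero N] (A : Coeffs N) : Coeffs N := dT 0 A

/-- Termwise product of Laurent series. -/
noncomputable def mul (A B : Coeffs N) : Coeffs N := fun n x => ∑' i : ℤ, A i x * B (n - i) x

/-- The Poisson bracket `{f,g} = f_P g_X - f_X g_P`. -/
noncomputable def pb [NeZero N] (A B : Coeffs N) : Coeffs N :=
  fun n x => mul (dP A) (dX B) n x - mul (dX A) (dP B) n x

/-- Truncation keeping only powers `P^n` with `n ≥ k`. -/
def truncGe (k : ℤ) (A : Coeffs N) : Coeffs N := fun n => if k ≤ n then A n else 0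

/-- Truncation keeping only powers `P^n` with `n ≤ k`. -/
def truncLe (k : ℤ) (A : Coeffs N) : Coeffs N := fun n => if n ≤ k then A n else 0

/-- The residue: coefficient of `P⁻¹`. -/
def res (A : Coeffs N) : (Fin N → ℝ) → ℝ := A (-1)

/-- The constant Laurent series `1`. -/
def one' : Coeffs N := fun n => if n = 0 then (fun _ => (1 : ℝ)) else 0

/-- `powC A q` is the `q`-th power `A^q`. -/
noncomputable def powC (A : Coeffs N) : ℕ → Coeffs N
  | 0 => one'
  | q + 1 => mul A (powC A q)

/-- `e^{-ad φ} A = Σ_{k≥0} (1/k!) (φ_X)^k ∂_P^k A`. -/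
noncomputable def expAdNeg [NeZero N] (φ : (Fin N → ℝ) → ℝ) (A : Coeffs N) : Coeffs N :=
  fun n x => ∑' k : ℕ, (pd 0 φ x) ^ k / (Nat.factorial k : ℝ) * (dP^[k] A) n x

/-- `e^{ad φ} A = Σ_{k≥0} (1/k!) (-φ_X)^k ∂_P^k A`. -/
noncomputable def expAdPos [NeZero N] (φ : (Fin N → ℝ) → ℝ) (A : Coeffs N) : Coeffs N :=
  fun n x => ∑' k : ℕ, (-(pd 0 φ x)) ^ k / (Nat.factorial k : ℝ) * (dP^[k] A) n x

/-- A `P`-independent function viewed as a Laurent series concentrated at `P^0`. -/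
def const (φ : (Fin N → ℝ) → ℝ) : Coeffs N := fun n => if n = 0 then φ else 0

/-- Evaluation of the polynomial (non-negative) part of `A` at `P = φ_X`. -/
noncomputable def evalAtPhiX [NeZero N] (A : Coeffs N) (φ : (Fin N → ℝ) → ℝ) :
    (Fin N → ℝ) → ℝ :=
  fun x => ∑' k : ℕ, A (k : ℤ) x * (pd 0 φ x) ^ k

/-- The shape `λ = P + U₂ P⁻¹ + U₃ P⁻² + ⋯` of the dKP Lax function. -/
def IsDKPShape (lam : Coeffs N) : Prop :=
  (lam 1 = fun _ => (1 : ℝ)) ∧ lam 0 = 0 ∧ ∀ n : ℤ, 2 ≤ n → lam n = 0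

/-- The shape `μ = P + V₀ + V₁ P⁻¹ + ⋯` of the dmKP Lax function. -/
def IsDMKPShape (mu : Coeffs N) : Prop :=
  (mu 1 = fun _ => (1 : ℝ)) ∧ ∀ n : ℤ, 2 ≤ n → mu n = 0


-- ====== auxiliary development ======

section Aux

/-! ### Generalized binomial coefficients -/

noncomputable def ch (r : ℝ) (k : ℕ) : ℝ := Ring.choose r k

lemma smeval_desc (r : ℝ) (k : ℕ) :
    (descPochhammer ℤ k).smeval r = (descPochhammer ℝ k).eval r := by
  induction k with
  | zero => simp [descPochhammer_zero, Polynomial.smeval_one]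
  | succ k ih =>
      rw [descPochhammer_succ_right, descPochhammer_succ_right, Polynomial.smeval_mul,
        Polynomial.eval_mul, ih, Polynomial.smeval_sub, Polynomial.smeval_X,
        Polynomial.smeval_natCast]
      simp

lemma ch_eq_desc (r : ℝ) (k : ℕ) : ch r k = (descPochhammer ℝ k).eval r / k.factorial := by
  have h := Ring.descPochhammer_eq_factorial_smul_choose r k
  rw [smeval_desc] at h
  rw [h]
  simp only [ch, nsmul_eq_mul]; field_simp

lemma ch_zero (r : ℝ) : ch r 0 = 1 := Ring.choose_zero_right r

lemma ch_natCast (m k : ℕ) : ch (m : ℝ) k = (m.choose k : ℝ) := by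
  rw [ch, Ring.choose_natCast]

lemma ch_int_zero (m : ℤ) (k : ℕ) (h0 : 0 ≤ m) (hk : m < k) : ch (m : ℝ) k = 0 := by
  lift m to ℕ using h0
  rw [Int.cast_natCast, ch_natCast, Nat.choose_eq_zero_of_lt (by exact_mod_cast hk)]
  simp

lemma ch_self (k : ℕ) : ch (k : ℝ) k = 1 := by
  rw [ch_natCast, Nat.choose_self]; simp

lemma ch_vander (x y : ℝ) (k : ℕ) :
    ch (x + y) k = ∑ ij ∈ Finset.HasAntidiagonal.antidiagonal k, ch x ij.1 * ch y ij.2 :=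
  Ring.add_choose_eq k (Commute.all x y)

lemma ch_succ (r : ℝ) (k : ℕ) : ((k : ℝ) + 1) * ch r (k + 1) = r * ch (r - 1) k := by
  rw [ch_eq_desc, ch_eq_desc]
  have h1 : (descPochhammer ℝ (k + 1)).eval r = r * (descPochhammer ℝ k).eval (r - 1) := by
    rw [descPochhammer_succ_left]
    simp [Polynomial.eval_comp]
  rw [h1, Nat.factorial_succ]
  have : (k.factorial : ℝ) ≠ 0 := by exact_mod_cast k.factorial_ne_zero
  field_simp
  push_cast; ring

lemma ch_absorb (r : ℝ) (k : ℕ) : (r + 1 - k) * ch (r + 1) k = (r + 1) * ch r k := by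
  rw [ch_eq_desc, ch_eq_desc]
  have h1 : (descPochhammer ℝ (k+1)).eval (r+1) = (descPochhammer ℝ k).eval (r+1) * (r + 1 - k) :=
    descPochhammer_succ_eval k (r+1)
  have h2 : (descPochhammer ℝ (k+1)).eval (r+1) = (r + 1) * (descPochhammer ℝ k).eval r := by
    rw [descPochhammer_succ_left]
    simp [Polynomial.eval_comp]
  have : (k.factorial : ℝ) ≠ 0 := by exact_mod_cast k.factorial_ne_zero
  field_simp
  nlinarith [h1, h2]

/-! ### Calculus of `pd` -/

variable {N : ℕ}

abbrev Sm (f : (Fin N → ℝ) → ℝ) : Prop := ContDiff ℝ (⊤ : ℕ∞) f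

lemma Sm.diff {f : (Fin N → ℝ) → ℝ} (h : Sm f) : Differentiable ℝ f :=
  h.differentiable (by simp)

lemma pd_smooth {f : (Fin N → ℝ) → ℝ} (h : Sm f) (q : Fin N) : Sm (pd q f) := by
  have h1 : ContDiff ℝ (⊤ : ℕ∞) (fderiv ℝ f) := h.fderiv_right (by simp)
  exact h1.clm_apply contDiff_const

lemma pd_const (q : Fin N) (a : ℝ) : pd q (fun _ => a) = 0 := by
  funext x; simp [pd]

lemma pd_zero (q : Fin N) : pd (N := N) q 0 = 0 := by
  funext x; simp only [pd]
  rw [show (0 : (Fin N → ℝ) → ℝ) = fun _ => (0:ℝ) from rfl]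
  simp

lemma pd_sub {f g : (Fin N → ℝ) → ℝ} (hf : Differentiable ℝ f) (hg : Differentiable ℝ g)
    (q : Fin N) : pd q (fun x => f x - g x) = fun x => pd q f x - pd q g x := by
  funext x
  simp only [pd]
  rw [fderiv_fun_sub (hf x) (hg x)]
  simp

lemma pd_mul {f g : (Fin N → ℝ) → ℝ} (hf : Differentiable ℝ f) (hg : Differentiable ℝ g)
    (q : Fin N) : pd q (fun x => f x * g x) = fun x => f x * pd q g x + g x * pd q f x := by
  funext x
  simp only [pd]
  rw [fderiv_fun_mul (hf x) (hg x)]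
  simp

lemma pd_sum {ι : Type*} (s : Finset ι) (f : ι → (Fin N → ℝ) → ℝ)
    (hf : ∀ i ∈ s, Differentiable ℝ (f i)) (q : Fin N) :
    pd q (fun x => ∑ i ∈ s, f i x) = fun x => ∑ i ∈ s, pd q (f i) x := by
  funext x
  simp only [pd]
  rw [fderiv_fun_sum (fun i hi => (hf i hi) x)]
  simp

lemma pd_const_mul {f : (Fin N → ℝ) → ℝ} (hf : Differentiable ℝ f) (q : Fin N) (a : ℝ) :
    pd q (fun x => a * f x) = fun x => a * pd q f x := by
  funext x
  simp only [pd]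
  rw [fderiv_const_mul (hf x)]
  simp

lemma pd_pow {f : (Fin N → ℝ) → ℝ} (hf : Differentiable ℝ f) (q : Fin N) (k : ℕ) :
    pd q (fun x => f x ^ k) = fun x => (k : ℝ) * f x ^ (k - 1) * pd q f x := by
  induction k with
  | zero => simp; exact pd_const q 1
  | succ k ih =>
      have : (fun x => f x ^ (k+1)) = fun x => f x * f x ^ k := by
        funext x; ring
      rw [this, pd_mul (g := fun x => f x ^ k) hf (hf.pow k), ih]
      funext x
      rcases Nat.eq_zero_or_pos k with hk | hk
      · subst hk; simp
      · have h1 : k - 1 + 1 = k := Nat.succ_pred_eq_of_pos hk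
        push_cast
        rw [show f x ^ k = f x ^ (k - 1) * f x by rw [← pow_succ, h1]]
        ring

lemma pd_clm {f : (Fin N → ℝ) → ℝ} (h : Sm f) (q : Fin N) (v : Fin N → ℝ) (x : Fin N → ℝ) :
    fderiv ℝ (fun y => fderiv ℝ f y v) x (Pi.single q 1)
      = fderiv ℝ (fderiv ℝ f) x (Pi.single q 1) v := by
  have hd : Differentiable ℝ (fderiv ℝ f) := (h.fderiv_right (m := (⊤ : ℕ∞)) (by simp)).differentiable (by simp)
  rw [fderiv_clm_apply (hd x) (differentiableAt_const v)]
  simp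

lemma pd_comm {f : (Fin N → ℝ) → ℝ} (h : Sm f) (q r : Fin N) :
    pd q (pd r f) = pd r (pd q f) := by
  funext x
  have hsym : IsSymmSndFDerivAt ℝ f x := (h.contDiffAt).isSymmSndFDerivAt (by rw [minSmoothness_of_isRCLikeNormedField]; exact WithTop.coe_le_coe.mpr (le_top : (2:ℕ∞) ≤ ⊤))
  show fderiv ℝ (fun y => fderiv ℝ f y (Pi.single r 1)) x (Pi.single q 1)
      = fderiv ℝ (fun y => fderiv ℝ f y (Pi.single q 1)) x (Pi.single r 1)
  rw [pd_clm h q _ x, pd_clm h r _ x]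
  exact hsym _ _

end Aux
section Aux2

variable {N : ℕ}

/-- coefficient-bound predicate -/
def Bd (A : Coeffs N) (m : ℤ) : Prop := ∀ n : ℤ, m < n → A n = 0

/-- all coefficients smooth -/
def SmC (A : Coeffs N) : Prop := ∀ n : ℤ, Sm (A n)

lemma Bd.ap {A : Coeffs N} {m : ℤ} (h : Bd A m) {n : ℤ} (hn : m < n) (x : Fin N → ℝ) :
    A n x = 0 := by rw [h n hn]; rfl

/-! ### mul -/

lemma summable_mul {A B : Coeffs N} {a b : ℤ} (hA : Bd A a) (hB : Bd B b) (n : ℤ)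
    (x : Fin N → ℝ) : Summable (fun i : ℤ => A i x * B (n - i) x) := by
  apply summable_of_ne_finset_zero (s := Finset.Icc (n - b) a)
  intro i hi
  rw [Finset.mem_Icc] at hi
  push_neg at hi
  rcases lt_or_ge a i with h | h
  · rw [hA.ap h x, zero_mul]
  · rw [hB.ap (by omega : b < n - i) x, mul_zero]

lemma mul_eq {A B : Coeffs N} {a b : ℤ} (hA : Bd A a) (hB : Bd B b) (n : ℤ) :
    mul A B n = fun x => ∑ i ∈ Finset.Icc (n - b) a, A i x * B (n - i) x := by
  funext x
  apply tsum_eq_sum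
  intro i hi
  rw [Finset.mem_Icc] at hi
  push_neg at hi
  rcases lt_or_ge a i with h | h
  · rw [hA.ap h x, zero_mul]
  · rw [hB.ap (by omega : b < n - i) x, mul_zero]

lemma Bd_mul {A B : Coeffs N} {a b : ℤ} (hA : Bd A a) (hB : Bd B b) :
    Bd (mul A B) (a + b) := by
  intro n hn
  funext x
  show (∑' i : ℤ, A i x * B (n - i) x) = 0
  have : (fun i : ℤ => A i x * B (n - i) x) = fun _ => 0 := by
    funext i
    rcases lt_or_ge a i with h | h
    · rw [hA.ap h x, zero_mul]
    · rw [hB.ap (by omega : b < n - i) x, mul_zero]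
  rw [this, tsum_zero]

lemma SmC_mul {A B : Coeffs N} {a b : ℤ} (hA : Bd A a) (hB : Bd B b)
    (sA : SmC A) (sB : SmC B) : SmC (mul A B) := by
  intro n
  rw [mul_eq hA hB n]
  exact ContDiff.sum fun i _ => (sA i).mul (sB (n - i))

lemma mul_add_right {A B C : Coeffs N} {a b c : ℤ} (hA : Bd A a) (hB : Bd B b) (hC : Bd C c) :
    mul A (fun n x => B n x + C n x) = fun n x => mul A B n x + mul A C n x := by
  funext n x
  show (∑' i : ℤ, A i x * (B (n - i) x + C (n - i) x)) = _
  rw [show (fun i : ℤ => A i x * (B (n - i) x + C (n - i) x))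
      = fun i => A i x * B (n - i) x + A i x * C (n - i) x by funext i; ring]
  exact Summable.tsum_add (summable_mul hA hB n x) (summable_mul hA hC n x)

lemma mul_sub_left {A B C : Coeffs N} {a b c : ℤ} (hA : Bd A a) (hB : Bd B b) (hC : Bd C c) :
    mul (fun n x => A n x - B n x) C = fun n x => mul A C n x - mul B C n x := by
  funext n x
  show (∑' i : ℤ, (A i x - B i x) * C (n - i) x) = _
  rw [show (fun i : ℤ => (A i x - B i x) * C (n - i) x)
      = fun i => A i x * C (n - i) x - B i x * C (n - i) x by funext i; ring]
  exact Summable.tsum_sub (summable_mul hA hC n x) (summable_mul hB hC n x)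

/-- multiplication of a series by a `P`-independent function -/
def fm (f : (Fin N → ℝ) → ℝ) (A : Coeffs N) : Coeffs N := fun n x => f x * A n x

lemma mul_fm_right (A B : Coeffs N) (f : (Fin N → ℝ) → ℝ) :
    mul A (fm f B) = fm f (mul A B) := by
  funext n x
  show (∑' i : ℤ, A i x * (f x * B (n - i) x)) = f x * ∑' i : ℤ, A i x * B (n - i) x
  rw [← tsum_mul_left]
  congr 1; funext i; ring

lemma mul_fm_left (A B : Coeffs N) (f : (Fin N → ℝ) → ℝ) :
    mul (fm f A) B = fm f (mul A B) := by
  funext n x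
  show (∑' i : ℤ, (f x * A i x) * B (n - i) x) = f x * ∑' i : ℤ, A i x * B (n - i) x
  rw [← tsum_mul_left]
  congr 1; funext i; ring

/-! ### dP, dT, dX basics -/

lemma Bd_dP {A : Coeffs N} {a : ℤ} (hA : Bd A a) : Bd (dP A) a := by
  intro n hn
  funext x
  show ((n + 1 : ℤ) : ℝ) * A (n + 1) x = 0
  rw [hA.ap (by omega) x, mul_zero]

lemma Bd_dT {A : Coeffs N} {a : ℤ} (hA : Bd A a) (q : Fin N) : Bd (dT q A) a := by
  intro n hn
  show pd q (A n) = 0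
  rw [hA n hn]
  exact pd_zero q

lemma dP_sub (A B : Coeffs N) :
    dP (fun n x => A n x - B n x) = fun n x => dP A n x - dP B n x := by
  funext n x
  show ((n+1:ℤ):ℝ) * (A (n+1) x - B (n+1) x) = ((n+1:ℤ):ℝ) * A (n+1) x - ((n+1:ℤ):ℝ) * B (n+1) x
  ring

lemma dT_sub {A B : Coeffs N} (sA : SmC A) (sB : SmC B) (q : Fin N) :
    dT q (fun n x => A n x - B n x) = fun n x => dT q A n x - dT q B n x := by
  funext n
  exact pd_sub (sA n).diff (sB n).diff q

end Aux2
section Aux3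

variable {N : ℕ}

/-- substitution `P ↦ P + c` -/
noncomputable def sh (c : (Fin N → ℝ) → ℝ) (A : Coeffs N) : Coeffs N :=
  fun n x => ∑' k : ℕ, ch ((n + k : ℤ) : ℝ) k * c x ^ k * A (n + k) x

/-- range bound for the `sh` sums -/
def shK (a n : ℤ) : ℕ := (a - n).toNat + 1

lemma shK_out {a n : ℤ} {k : ℕ} (h : k ∉ Finset.range (shK a n)) : a < n + k := by
  rw [Finset.mem_range, shK] at h
  push_neg at h
  have h1 : a - n ≤ ((a - n).toNat : ℤ) := Int.self_le_toNat _
  have h2 : ((a - n).toNat + 1 : ℤ) ≤ (k : ℤ) := by exact_mod_cast h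
  omega

lemma sh_term_out {A : Coeffs N} {a : ℤ} (hA : Bd A a) (c : (Fin N → ℝ) → ℝ) (n : ℤ)
    (x : Fin N → ℝ) {k : ℕ} (h : k ∉ Finset.range (shK a n)) :
    ch ((n + k : ℤ) : ℝ) k * c x ^ k * A (n + k) x = 0 := by
  rw [hA.ap (shK_out h) x, mul_zero]

lemma summable_sh {A : Coeffs N} {a : ℤ} (hA : Bd A a) (c : (Fin N → ℝ) → ℝ) (n : ℤ)
    (x : Fin N → ℝ) :
    Summable (fun k : ℕ => ch ((n + k : ℤ) : ℝ) k * c x ^ k * A (n + k) x) :=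
  summable_of_ne_finset_zero (s := Finset.range (shK a n))
    (fun _ h => sh_term_out hA c n x h)

lemma sh_eq {A : Coeffs N} {a : ℤ} (hA : Bd A a) (c : (Fin N → ℝ) → ℝ) (n : ℤ) :
    sh c A n = fun x => ∑ k ∈ Finset.range (shK a n),
      ch ((n + k : ℤ) : ℝ) k * c x ^ k * A (n + k) x := by
  funext x
  exact tsum_eq_sum (fun _ h => sh_term_out hA c n x h)

lemma Bd_sh {A : Coeffs N} {a : ℤ} (hA : Bd A a) (c : (Fin N → ℝ) → ℝ) :
    Bd (sh c A) a := by
  intro n hn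
  funext x
  show (∑' k : ℕ, ch ((n + k : ℤ) : ℝ) k * c x ^ k * A (n + k) x) = 0
  have : (fun k : ℕ => ch ((n + k : ℤ) : ℝ) k * c x ^ k * A (n + k) x) = fun _ => 0 := by
    funext k
    rw [hA.ap (by omega : a < n + k) x, mul_zero]
  rw [this, tsum_zero]

lemma SmC_sh {A : Coeffs N} {a : ℤ} (hA : Bd A a) {c : (Fin N → ℝ) → ℝ} (hc : Sm c)
    (sA : SmC A) : SmC (sh c A) := by
  intro n
  rw [sh_eq hA c n]
  exact ContDiff.sum fun k _ => (contDiff_const.mul (hc.pow k)).mul (sA (n + k))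

lemma sh_sub {A B : Coeffs N} {a b : ℤ} (hA : Bd A a) (hB : Bd B b)
    (c : (Fin N → ℝ) → ℝ) :
    sh c (fun n x => A n x - B n x) = fun n x => sh c A n x - sh c B n x := by
  funext n x
  show (∑' k : ℕ, ch ((n + k : ℤ) : ℝ) k * c x ^ k * (A (n + k) x - B (n + k) x)) = _
  rw [show (fun k : ℕ => ch ((n + k : ℤ) : ℝ) k * c x ^ k * (A (n + k) x - B (n + k) x))
      = fun k : ℕ => ch ((n + k : ℤ) : ℝ) k * c x ^ k * A (n + k) x
          - ch ((n + k : ℤ) : ℝ) k * c x ^ k * B (n + k) x by funext k; ring]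
  exact Summable.tsum_sub (summable_sh hA c n x) (summable_sh hB c n x)

/-- `sh` of the constant series `1`. -/
lemma sh_one (c : (Fin N → ℝ) → ℝ) : sh (N := N) c one' = one' := by
  funext n x
  show (∑' k : ℕ, ch ((n + k : ℤ) : ℝ) k * c x ^ k * one' (n + k) x) = one' n x
  have hterm : ∀ k : ℕ, k ∉ ({0} : Finset ℕ) →
      ch ((n + k : ℤ) : ℝ) k * c x ^ k * one' (n + k) x = 0 := by
    intro k hk
    rw [Finset.mem_singleton] at hk
    by_cases h0 : n + k = 0
    · -- n = -k, k ≥ 1: ch 0 k = 0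
      have : ch ((n + k : ℤ) : ℝ) k = 0 := by
        rw [h0]
        exact ch_int_zero 0 k le_rfl (by exact_mod_cast Nat.pos_of_ne_zero hk)
      rw [this, zero_mul, zero_mul]
    · have : one' (n + k) = (0 : (Fin N → ℝ) → ℝ) := by simp [one', h0]
      rw [this]
      show ch ((n + k : ℤ) : ℝ) k * c x ^ k * 0 = 0
      rw [mul_zero]
  by_cases hn : n = 0
  · subst hn
    rw [tsum_eq_sum hterm]
    simp [one', ch_zero]
  · rw [tsum_eq_sum hterm]
    have h1 : one' ((n : ℤ) + (0 : ℕ)) = (0 : (Fin N → ℝ) → ℝ) := by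
      simp [one', hn]
    simp only [Finset.sum_singleton, Nat.cast_zero, h1]
    simp [one', hn]

/-! ### `expAdNeg` is `sh` -/

lemma dP_iter (A : Coeffs N) (k : ℕ) (n : ℤ) (x : Fin N → ℝ) :
    (dP^[k] A) n x = (∏ j ∈ Finset.range k, ((n : ℝ) + j + 1)) * A (n + k) x := by
  induction k generalizing A n with
  | zero => simp
  | succ k ih =>
      rw [Function.iterate_succ_apply, ih (dP A) n, Finset.prod_range_succ]
      show _ * (((n + k + 1 : ℤ) : ℝ) * A (n + k + 1) x) = _
      have h1 : A ((n : ℤ) + (k + 1 : ℕ)) = A (n + k + 1) := by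
        congr 1; push_cast; ring
      rw [h1]
      push_cast
      ring

lemma prod_eq_ch (n : ℤ) (k : ℕ) :
    (∏ j ∈ Finset.range k, ((n : ℝ) + j + 1)) = ch ((n + k : ℤ) : ℝ) k * k.factorial := by
  induction k with
  | zero => simp [ch_zero]
  | succ k ih =>
      rw [Finset.prod_range_succ, ih]
      have h2 := ch_succ ((n + k + 1 : ℤ) : ℝ) k
      have h3 : ((n + k + 1 : ℤ) : ℝ) - 1 = ((n + k : ℤ) : ℝ) := by push_cast; ring
      rw [h3] at h2
      have h4 : ((n + (k + 1 : ℕ) : ℤ) : ℝ) = ((n + k + 1 : ℤ) : ℝ) := by push_cast; ring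
      rw [h4, Nat.factorial_succ]
      push_cast
      push_cast at h2
      nlinarith [h2]

lemma expAdNeg_eq_sh [NeZero N] (φ : (Fin N → ℝ) → ℝ) (A : Coeffs N) :
    expAdNeg φ A = sh (pd 0 φ) A := by
  funext n x
  apply tsum_congr
  intro k
  rw [dP_iter A k n x, prod_eq_ch n k]
  have : (k.factorial : ℝ) ≠ 0 := by exact_mod_cast k.factorial_ne_zero
  field_simp

end Aux3
section Aux4

variable {N : ℕ} [NeZero N]

lemma sh_dP (c : (Fin N → ℝ) → ℝ) (A : Coeffs N) : sh c (dP A) = dP (sh c A) := by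
  funext n x
  show (∑' k : ℕ, ch ((n + k : ℤ) : ℝ) k * c x ^ k * dP A (n + k) x)
      = ((n + 1 : ℤ) : ℝ) * ∑' k : ℕ, ch ((n + 1 + k : ℤ) : ℝ) k * c x ^ k * A (n + 1 + k) x
  rw [← tsum_mul_left]
  apply tsum_congr
  intro k
  show ch ((n + k : ℤ) : ℝ) k * c x ^ k * (((n + k + 1 : ℤ) : ℝ) * A (n + k + 1) x) = _
  have hidx : n + 1 + (k : ℤ) = n + k + 1 := by ring
  rw [hidx]
  have habs := ch_absorb ((n + k : ℤ) : ℝ) k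
  have h1 : ((n + k : ℤ) : ℝ) + 1 - k = ((n + 1 : ℤ) : ℝ) := by push_cast; ring
  have h2 : ((n + k : ℤ) : ℝ) + 1 = ((n + k + 1 : ℤ) : ℝ) := by push_cast; ring
  rw [h1, h2] at habs
  linear_combination (-(c x ^ k * A (n + k + 1) x)) * habs

lemma ch_step (n : ℤ) (j : ℕ) :
    ((j : ℝ) + 1) * ch ((n + j + 1 : ℤ) : ℝ) (j + 1)
      = ((n + j + 1 : ℤ) : ℝ) * ch ((n + j : ℤ) : ℝ) j := by
  have h := ch_succ ((n + j + 1 : ℤ) : ℝ) j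
  have h3 : ((n + j + 1 : ℤ) : ℝ) - 1 = ((n + j : ℤ) : ℝ) := by push_cast; ring
  rw [h3] at h
  exact h

lemma sh_dT {A : Coeffs N} {a : ℤ} (hA : Bd A a) (sA : SmC A)
    {c : (Fin N → ℝ) → ℝ} (hc : Sm c) (q : Fin N) :
    dT q (sh c A) = fun n x => sh c (dT q A) n x + pd q c x * sh c (dP A) n x := by
  funext n
  show pd q (sh c A n) = _
  rw [sh_eq hA c n]
  have hdiff : ∀ k : ℕ, Differentiable ℝ
      (fun x : Fin N → ℝ => ch ((n + k : ℤ) : ℝ) k * c x ^ k * A (n + k) x) := by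
    intro k
    exact Sm.diff ((contDiff_const.mul (hc.pow k)).mul (sA (n + k)))
  rw [pd_sum _ _ (fun k _ => hdiff k) q]
  have hterm : ∀ k : ℕ, pd q (fun x => ch ((n + k : ℤ) : ℝ) k * c x ^ k * A (n + k) x)
      = fun x => ch ((n + k : ℤ) : ℝ) k * (c x ^ k * pd q (A (n + k)) x
          + A (n + k) x * ((k : ℝ) * c x ^ (k - 1) * pd q c x)) := by
    intro k
    have e1 : (fun x => ch ((n + k : ℤ) : ℝ) k * c x ^ k * A (n + k) x)
        = fun x => ch ((n + k : ℤ) : ℝ) k * (c x ^ k * A (n + k) x) := by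
      funext x; ring
    rw [e1, pd_const_mul (f := fun x => c x ^ k * A (n + k) x) ((Sm.diff hc).pow k |>.mul (Sm.diff (sA (n + k)))) q,
      pd_mul (f := fun x => c x ^ k) ((Sm.diff hc).pow k) (Sm.diff (sA (n + k))) q, pd_pow (Sm.diff hc) q k]
    try (funext x; ring)
  funext x
  simp only [hterm]
  rw [show (fun k : ℕ => ch ((n + k : ℤ) : ℝ) k * (c x ^ k * pd q (A (n + k)) x
        + A (n + k) x * ((k : ℝ) * c x ^ (k - 1) * pd q c x)))
      = fun k : ℕ => (ch ((n + k : ℤ) : ℝ) k * c x ^ k * pd q (A (n + k)) x)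
        + (ch ((n + k : ℤ) : ℝ) k * A (n + k) x * ((k : ℝ) * c x ^ (k - 1) * pd q c x))
      from by funext k; ring, Finset.sum_add_distrib]
  congr 1
  · rw [sh_eq (Bd_dT hA q) c n]
    try rfl
  · rw [sh_eq (Bd_dP hA) c n]
    show ∑ k ∈ Finset.range ((a - n).toNat + 1),
        ch ((n + k : ℤ) : ℝ) k * A (n + k) x * ((k : ℝ) * c x ^ (k - 1) * pd q c x)
      = pd q c x * ∑ k ∈ Finset.range ((a - n).toNat + 1),
        ch ((n + k : ℤ) : ℝ) k * c x ^ k * dP A (n + k) x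
    rw [Finset.mul_sum]
    set M := (a - n).toNat with hM
    rw [Finset.sum_range_succ' (fun k => ch ((n + k : ℤ) : ℝ) k * A (n + k) x
        * ((k : ℝ) * c x ^ (k - 1) * pd q c x)) M]
    rw [Finset.sum_range_succ (fun k => pd q c x * (ch ((n + k : ℤ) : ℝ) k * c x ^ k
        * dP A (n + k) x)) M]
    have hlastz : A (n + (M : ℤ) + 1) x = 0 := by
      apply hA.ap
      have := Int.self_le_toNat (a - n)
      omega
    have hz2 : pd q c x * (ch ((n + M : ℤ) : ℝ) M * c x ^ M * dP A (n + M) x) = 0 := by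
      show pd q c x * (ch ((n + M : ℤ) : ℝ) M * c x ^ M
        * (((n + M + 1 : ℤ) : ℝ) * A (n + (M : ℤ) + 1) x)) = 0
      rw [hlastz]
      ring
    rw [hz2]
    have hz1 : ch ((n + (0:ℕ) : ℤ) : ℝ) 0 * A (n + (0:ℕ)) x
        * (((0:ℕ) : ℝ) * c x ^ ((0:ℕ) - 1) * pd q c x) = 0 := by
      simp
    rw [hz1]
    rw [add_zero, add_zero]
    apply Finset.sum_congr rfl
    intro j _
    have hidx : (n + ((j + 1 : ℕ) : ℤ)) = n + j + 1 := by push_cast; ring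
    show ch ((n + ((j+1:ℕ)) : ℤ) : ℝ) (j+1) * A (n + ((j+1:ℕ) : ℤ)) x
        * (((j+1 : ℕ) : ℝ) * c x ^ ((j+1) - 1) * pd q c x)
      = pd q c x * (ch ((n + j : ℤ) : ℝ) j * c x ^ j * dP A (n + (j:ℤ)) x)
    rw [hidx]
    show ch ((n + j + 1 : ℤ) : ℝ) (j+1) * A (n + (j:ℤ) + 1) x
        * (((j+1 : ℕ) : ℝ) * c x ^ j * pd q c x)
      = pd q c x * (ch ((n + j : ℤ) : ℝ) j * c x ^ j
          * (((n + j + 1 : ℤ) : ℝ) * A (n + (j:ℤ) + 1) x))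
    have h := ch_step n j
    push_cast
    push_cast at h
    linear_combination (A (n + (j:ℤ) + 1) x * c x ^ j * pd q c x) * h

end Aux4
section Aux5

lemma antidiag_square (P : ℕ) (F : ℕ → ℕ → ℝ) (h : ∀ p q, P ≤ p + q → F p q = 0) :
    ∑ k ∈ Finset.range P, ∑ pq ∈ Finset.HasAntidiagonal.antidiagonal k, F pq.1 pq.2
      = ∑ p ∈ Finset.range P, ∑ q ∈ Finset.range P, F p q := by
  rw [Finset.sum_sigma', ← Finset.sum_product']
  have step1 : (∑ x ∈ (Finset.range P).sigma (fun k => Finset.HasAntidiagonal.antidiagonal k), F x.2.1 x.2.2)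
      = ∑ pq ∈ (Finset.range P ×ˢ Finset.range P).filter (fun pq => pq.1 + pq.2 < P),
          F pq.1 pq.2 := by
    apply Finset.sum_nbij' (i := fun x => x.2) (j := fun pq => ⟨pq.1 + pq.2, pq⟩)
    · intro a ha
      rw [Finset.mem_sigma] at ha
      obtain ⟨h1, h2⟩ := ha
      rw [Finset.mem_range] at h1
      rw [Finset.HasAntidiagonal.mem_antidiagonal] at h2
      simp only [Finset.mem_filter, Finset.mem_product, Finset.mem_range]
      omega
    · intro b hb
      simp only [Finset.mem_filter, Finset.mem_product, Finset.mem_range] at hb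
      rw [Finset.mem_sigma]
      constructor
      · simp only [Finset.mem_range]; omega
      · simp [Finset.mem_antidiagonal]
    · intro a ha
      rw [Finset.mem_sigma] at ha
      obtain ⟨-, h2⟩ := ha
      rw [Finset.HasAntidiagonal.mem_antidiagonal] at h2
      exact Sigma.ext h2 (by rfl)
    · intro b _; rfl
    · intro a _; rfl
  rw [step1]
  apply Finset.sum_subset (Finset.filter_subset _ _)
  intro pq _ hpq
  simp only [Finset.mem_filter, Finset.mem_product, Finset.mem_range] at hpq
  apply h
  by_contra hc
  push_neg at hc
  exact hpq ⟨⟨by omega, by omega⟩, by omega⟩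

end Aux5
section Aux6

variable {N : ℕ}

lemma shift_sum {A B : Coeffs N} {a b : ℤ} (hA : Bd A a) (hB : Bd B b) (n : ℤ)
    (x : Fin N → ℝ) (t : ℝ) (p q : ℕ) :
    ∑ j ∈ Finset.Icc (n - b) a, ch ((j : ℤ) : ℝ) p * ch ((n + p + q - j : ℤ) : ℝ) q
        * t ^ (p + q) * (A j x * B (n + p + q - j) x)
      = ∑ i ∈ Finset.Icc (n - b) a, (ch ((i + p : ℤ) : ℝ) p * t ^ p * A (i + p) x)
        * (ch ((n - i + q : ℤ) : ℝ) q * t ^ q * B (n - i + q) x) := by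
  set g : ℤ → ℝ := fun j => ch ((j : ℤ) : ℝ) p * ch ((n + p + q - j : ℤ) : ℝ) q
      * t ^ (p + q) * (A j x * B (n + p + q - j) x) with hg
  have hhi : ∀ j : ℤ, a < j → g j = 0 := by
    intro j hj
    rw [hg]
    simp only
    rw [hA.ap hj x]
    ring
  have hlo : ∀ j : ℤ, j < n - b + p → g j = 0 := by
    intro j hj
    rw [hg]
    simp only
    rw [hB.ap (by omega : b < n + p + q - j) x]
    ring
  have step1 : ∑ i ∈ Finset.Icc (n - b) a, (ch ((i + p : ℤ) : ℝ) p * t ^ p * A (i + p) x)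
        * (ch ((n - i + q : ℤ) : ℝ) q * t ^ q * B (n - i + q) x)
      = ∑ i ∈ Finset.Icc (n - b) a, g (i + p) := by
    apply Finset.sum_congr rfl
    intro i _
    rw [hg]
    simp only
    have h1 : n + p + q - (i + p) = n - i + q := by ring
    rw [h1]
    ring
  have step2 : ∑ i ∈ Finset.Icc (n - b) a, g (i + p)
      = ∑ j ∈ Finset.Icc (n - b + p) (a + p), g j := by
    rw [← Finset.map_add_right_Icc, Finset.sum_map]
    rfl
  have step3 : ∑ j ∈ Finset.Icc (n - b + p) (a + p), g j
      = ∑ j ∈ Finset.Icc (n - b) (a + p), g j := by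
    apply Finset.sum_subset
    · apply Finset.Icc_subset_Icc_left; omega
    · intro j hj hj2
      rw [Finset.mem_Icc] at hj hj2
      push_neg at hj2
      exact hlo j (by omega)
  have step4 : ∑ j ∈ Finset.Icc (n - b) a, g j
      = ∑ j ∈ Finset.Icc (n - b) (a + p), g j := by
    apply Finset.sum_subset
    · apply Finset.Icc_subset_Icc_right; omega
    · intro j hj hj2
      rw [Finset.mem_Icc] at hj hj2
      push_neg at hj2
      exact hhi j (by omega)
  rw [step1, step2, step3, ← step4]

lemma sh_mul {A B : Coeffs N} {a b : ℤ} (hA : Bd A a) (hB : Bd B b)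
    (c : (Fin N → ℝ) → ℝ) :
    sh c (mul A B) = mul (sh c A) (sh c B) := by
  funext n x
  set P : ℕ := shK (a + b) n with hP
  set I : Finset ℤ := Finset.Icc (n - b) a with hIdef
  have hPbig : a + b - n < (P : ℤ) := by
    have := Int.self_le_toNat (a + b - n)
    rw [hP, shK]
    push_cast
    omega
  -- LHS into triple sum
  have e1 : sh c (mul A B) n x = ∑ k ∈ Finset.range P,
      ch ((n + k : ℤ) : ℝ) k * c x ^ k * mul A B (n + k) x :=
    congrFun (sh_eq (Bd_mul hA hB) c n) x
  have e2 : ∀ k : ℕ, mul A B ((n + k : ℤ)) x = ∑ j ∈ I, A j x * B (n + k - j) x := by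
    intro k
    apply tsum_eq_sum
    intro j hj
    rw [hIdef, Finset.mem_Icc] at hj
    push_neg at hj
    rcases lt_or_ge a j with h | h
    · rw [hA.ap h x, zero_mul]
    · rw [hB.ap (by omega : b < n + k - j) x, mul_zero]
  have e3 : sh c (mul A B) n x = ∑ j ∈ I, ∑ p ∈ Finset.range P, ∑ q ∈ Finset.range P,
      ch ((j : ℤ) : ℝ) p * ch ((n + p + q - j : ℤ) : ℝ) q * c x ^ (p + q)
        * (A j x * B (n + p + q - j) x) := by
    rw [e1]
    have h4 : ∀ k ∈ Finset.range P, ch ((n + k : ℤ) : ℝ) k * c x ^ k * mul A B (n + k) x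
        = ∑ j ∈ I, ∑ pq ∈ Finset.HasAntidiagonal.antidiagonal k,
            ch ((j : ℤ) : ℝ) pq.1 * ch ((n + k - j : ℤ) : ℝ) pq.2 * c x ^ k
              * (A j x * B (n + k - j) x) := by
      intro k _
      rw [e2 k, Finset.mul_sum]
      apply Finset.sum_congr rfl
      intro j _
      have hvan : ch ((n + k : ℤ) : ℝ) k = ∑ pq ∈ Finset.HasAntidiagonal.antidiagonal k,
          ch ((j : ℤ) : ℝ) pq.1 * ch ((n + k - j : ℤ) : ℝ) pq.2 := by
        have hx : ((n + k : ℤ) : ℝ) = ((j : ℤ) : ℝ) + ((n + k - j : ℤ) : ℝ) := by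
          push_cast; ring
        rw [hx]
        exact ch_vander _ _ k
      rw [hvan, Finset.sum_mul, Finset.sum_mul]
      try (apply Finset.sum_congr rfl; intro pq _; ring)
    rw [Finset.sum_congr rfl h4, Finset.sum_comm]
    apply Finset.sum_congr rfl
    intro j hj
    have hja : j ≤ a := by
      rw [hIdef, Finset.mem_Icc] at hj; exact hj.2
    have h5 : ∀ k ∈ Finset.range P, (∑ pq ∈ Finset.HasAntidiagonal.antidiagonal k,
        ch ((j : ℤ) : ℝ) pq.1 * ch ((n + k - j : ℤ) : ℝ) pq.2 * c x ^ k
          * (A j x * B (n + k - j) x))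
        = ∑ pq ∈ Finset.HasAntidiagonal.antidiagonal k,
            ch ((j : ℤ) : ℝ) pq.1 * ch ((n + pq.1 + pq.2 - j : ℤ) : ℝ) pq.2
              * c x ^ (pq.1 + pq.2) * (A j x * B (n + pq.1 + pq.2 - j) x) := by
      intro k _
      apply Finset.sum_congr rfl
      intro pq hpq
      rw [Finset.HasAntidiagonal.mem_antidiagonal] at hpq
      rw [show (n + k - j : ℤ) = n + pq.1 + pq.2 - j by rw [← hpq]; push_cast; ring,
        show c x ^ k = c x ^ (pq.1 + pq.2) by rw [hpq]]
    rw [Finset.sum_congr rfl h5]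
    exact antidiag_square P
      (fun p q => ch ((j : ℤ) : ℝ) p * ch ((n + p + q - j : ℤ) : ℝ) q * c x ^ (p + q)
        * (A j x * B (n + p + q - j) x))
      (by
        intro p q hpq
        beta_reduce
        rw [hB.ap (by omega : b < n + p + q - j) x]
        ring)
  -- RHS into triple sum
  have f1 : mul (sh c A) (sh c B) n x = ∑ i ∈ I, sh c A i x * sh c B (n - i) x := by
    apply tsum_eq_sum
    intro i hi
    rw [hIdef, Finset.mem_Icc] at hi
    push_neg at hi
    rcases lt_or_ge a i with h | h
    · rw [(Bd_sh hA c).ap h x, zero_mul]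
    · rw [(Bd_sh hB c).ap (by omega : b < n - i) x, mul_zero]
  have f4 : mul (sh c A) (sh c B) n x = ∑ i ∈ I, ∑ p ∈ Finset.range P, ∑ q ∈ Finset.range P,
      (ch ((i + p : ℤ) : ℝ) p * c x ^ p * A (i + p) x)
        * (ch ((n - i + q : ℤ) : ℝ) q * c x ^ q * B (n - i + q) x) := by
    rw [f1]
    apply Finset.sum_congr rfl
    intro i hi
    rw [hIdef, Finset.mem_Icc] at hi
    have fA : sh c A i x = ∑ p ∈ Finset.range P,
        ch ((i + p : ℤ) : ℝ) p * c x ^ p * A (i + p) x := by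
      apply tsum_eq_sum
      intro p hp
      rw [Finset.mem_range] at hp
      push_neg at hp
      have : (P : ℤ) ≤ (p : ℤ) := by exact_mod_cast hp
      rw [hA.ap (by omega : a < i + p) x, mul_zero]
    have fB : sh c B (n - i) x = ∑ q ∈ Finset.range P,
        ch ((n - i + q : ℤ) : ℝ) q * c x ^ q * B (n - i + q) x := by
      apply tsum_eq_sum
      intro q hq
      rw [Finset.mem_range] at hq
      push_neg at hq
      have : (P : ℤ) ≤ (q : ℤ) := by exact_mod_cast hq
      rw [hB.ap (by omega : b < n - i + q) x, mul_zero]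
    rw [fA, fB, Finset.sum_mul_sum]
  -- match the two triple sums
  have reorder : ∀ (F : ℤ → ℕ → ℕ → ℝ),
      (∑ j ∈ I, ∑ p ∈ Finset.range P, ∑ q ∈ Finset.range P, F j p q)
        = ∑ p ∈ Finset.range P, ∑ q ∈ Finset.range P, ∑ j ∈ I, F j p q := by
    intro F
    rw [Finset.sum_comm]
    apply Finset.sum_congr rfl
    intro p _
    rw [Finset.sum_comm]
  rw [e3, f4, reorder, reorder]
  apply Finset.sum_congr rfl
  intro p _
  apply Finset.sum_congr rfl
  intro q _
  rw [hIdef]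
  exact shift_sum hA hB n x (c x) p q

end Aux6
section Aux7

variable {N : ℕ}

/-! ### powC -/

lemma Bd_one : Bd (one' : Coeffs N) 0 := by
  intro n hn
  show (if n = 0 then (fun _ : Fin N → ℝ => (1:ℝ)) else (0 : (Fin N → ℝ) → ℝ)) = 0
  rw [if_neg (by omega : ¬ n = 0)]

lemma SmC_one : SmC (one' : Coeffs N) := by
  intro n
  show Sm (if n = 0 then (fun _ : Fin N → ℝ => (1:ℝ)) else (0 : (Fin N → ℝ) → ℝ))
  by_cases h : n = 0
  · rw [if_pos h]; exact contDiff_const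
  · rw [if_neg h]; exact contDiff_const

lemma Bd_powC {A : Coeffs N} (hA : Bd A 1) (m : ℕ) : Bd (powC A m) (m : ℤ) := by
  induction m with
  | zero => exact Bd_one
  | succ m ih =>
      have := Bd_mul hA ih
      intro n hn
      exact this n (by push_cast; omega)

lemma SmC_powC {A : Coeffs N} (hA : Bd A 1) (sA : SmC A) (m : ℕ) : SmC (powC A m) := by
  induction m with
  | zero => exact SmC_one
  | succ m ih => exact SmC_mul hA (Bd_powC hA m) sA ih

lemma sh_powC {A : Coeffs N} (hA : Bd A 1) (c : (Fin N → ℝ) → ℝ) (m : ℕ) :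
    sh c (powC A m) = powC (sh c A) m := by
  induction m with
  | zero => exact sh_one c
  | succ m ih =>
      show sh c (mul A (powC A m)) = mul (sh c A) (powC (sh c A) m)
      rw [sh_mul hA (Bd_powC hA m) c, ih]

/-! ### truncGe -/

lemma Bd_truncGe {A : Coeffs N} {a : ℤ} (hA : Bd A a) (k : ℤ) (hk : 0 ≤ k) :
    Bd (truncGe k A) a := by
  intro n hn
  show (if k ≤ n then A n else 0) = 0
  by_cases h : k ≤ n
  · rw [if_pos h]; exact hA n hn
  · rw [if_neg h]

lemma SmC_truncGe {A : Coeffs N} (sA : SmC A) (k : ℤ) : SmC (truncGe k A) := by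
  intro n
  show Sm (if k ≤ n then A n else 0)
  by_cases h : k ≤ n
  · rw [if_pos h]; exact sA n
  · rw [if_neg h]; exact contDiff_const

/-! ### const -/

lemma Bd_const' (f : (Fin N → ℝ) → ℝ) (a : ℤ) (ha : 0 ≤ a) : Bd (const f) a := by
  intro n hn
  show (if n = 0 then f else 0) = 0
  rw [if_neg (by omega : ¬ n = 0)]

lemma SmC_const {f : (Fin N → ℝ) → ℝ} (hf : Sm f) : SmC (const f) := by
  intro n
  show Sm (if n = 0 then f else 0)
  by_cases h : n = 0
  · rw [if_pos h]; exact hf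
  · rw [if_neg h]; exact contDiff_const

lemma dP_const (f : (Fin N → ℝ) → ℝ) : dP (const f) = fun _ _ => (0 : ℝ) := by
  funext n x
  show ((n + 1 : ℤ) : ℝ) * const f (n + 1) x = 0
  by_cases h : n + 1 = 0
  · rw [h]; simp
  · simp [const, h]

lemma mul_zero_left (C : Coeffs N) : mul (fun _ _ => (0:ℝ)) C = fun _ _ => (0:ℝ) := by
  funext n x
  show (∑' i : ℤ, (0:ℝ) * C (n - i) x) = 0
  simp

lemma mul_const_left (f : (Fin N → ℝ) → ℝ) (C : Coeffs N) :
    mul (const f) C = fm f C := by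
  funext n x
  show (∑' i : ℤ, const f i x * C (n - i) x) = f x * C n x
  rw [tsum_eq_sum (s := {0}) (by
    intro i hi
    rw [Finset.mem_singleton] at hi
    simp [const, hi])]
  simp [const]

end Aux7

section Aux8

variable {N : ℕ} [NeZero N]

lemma dX_const {f : (Fin N → ℝ) → ℝ} : dX (const f) = const (pd 0 f) := by
  funext n
  show pd 0 (const f n) = const (pd 0 f) n
  by_cases h : n = 0
  · simp [const, h]
  · simp only [const, h, if_false]
    exact pd_zero 0

lemma pb_const {f : (Fin N → ℝ) → ℝ} (M : Coeffs N) :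
    pb (const f) M = fun n x => -(pd 0 f x * dP M n x) := by
  funext n x
  show mul (dP (const f)) (dX M) n x - mul (dX (const f)) (dP M) n x = _
  rw [dP_const, mul_zero_left, dX_const, mul_const_left]
  show 0 - fm (pd 0 f) (dP M) n x = -(pd 0 f x * dP M n x)
  rw [fm]
  ring

/-- decomposition of the `≥ 1` truncation of a shifted series -/
lemma trunc_sh {B : Coeffs N} {m : ℤ} (hB : Bd B m) (φ : (Fin N → ℝ) → ℝ) :
    truncGe 1 (sh (pd 0 φ) B)
      = fun n x => sh (pd 0 φ) (truncGe 0 B) n x - const (evalAtPhiX B φ) n x := by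
  funext n x
  rcases lt_trichotomy n 0 with hn | hn | hn
  · -- n < 0 : both sides vanish
    have h1 : truncGe 1 (sh (pd 0 φ) B) n x = 0 := by
      show (if (1:ℤ) ≤ n then sh (pd 0 φ) B n else 0) x = 0
      rw [if_neg (by omega : ¬ (1:ℤ) ≤ n)]
      rfl
    have h2 : const (evalAtPhiX B φ) n x = 0 := by
      show (if n = 0 then evalAtPhiX B φ else 0) x = 0
      rw [if_neg (by omega : ¬ n = 0)]
      rfl
    rw [h1, h2]
    have h3 : sh (pd 0 φ) (truncGe 0 B) n x = 0 := by
      show (∑' k : ℕ, ch ((n + k : ℤ) : ℝ) k * pd 0 φ x ^ k * truncGe 0 B (n + k) x) = 0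
      have : ∀ k : ℕ, ch ((n + k : ℤ) : ℝ) k * pd 0 φ x ^ k * truncGe 0 B (n + k) x = 0 := by
        intro k
        by_cases h : 0 ≤ n + k
        · rw [ch_int_zero (n + k) k h (by omega), zero_mul, zero_mul]
        · show ch ((n + k : ℤ) : ℝ) k * pd 0 φ x ^ k * (if (0:ℤ) ≤ n + k then B (n+k) else 0) x = 0
          rw [if_neg h]
          show _ * _ * (0 : (Fin N → ℝ) → ℝ) x = 0
          show _ * _ * (0:ℝ) = 0
          rw [mul_zero]
      rw [tsum_congr this, tsum_zero]
    rw [h3]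
    ring
  · -- n = 0
    subst hn
    have h1 : truncGe 1 (sh (pd 0 φ) B) 0 x = 0 := by
      show (if (1:ℤ) ≤ 0 then sh (pd 0 φ) B 0 else 0) x = 0
      rw [if_neg (by omega : ¬ (1:ℤ) ≤ 0)]
      rfl
    rw [h1]
    have h2 : sh (pd 0 φ) (truncGe 0 B) 0 x = evalAtPhiX B φ x := by
      show (∑' k : ℕ, ch ((0 + k : ℤ) : ℝ) k * pd 0 φ x ^ k * truncGe 0 B (0 + k) x)
          = ∑' k : ℕ, B (k : ℤ) x * pd 0 φ x ^ k
      apply tsum_congr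
      intro k
      have hch : ch ((0 + k : ℤ) : ℝ) k = 1 := by
        rw [show ((0 + k : ℤ) : ℝ) = (k : ℝ) by push_cast; ring]
        exact ch_self k
      have htr : truncGe 0 B ((0 : ℤ) + k) = B (k : ℤ) := by
        show (if (0:ℤ) ≤ 0 + k then B (0 + k) else 0) = B (k : ℤ)
        rw [if_pos (by omega : (0:ℤ) ≤ 0 + (k:ℤ))]
        norm_num
      rw [hch, htr]
      ring
    rw [h2]
    show (0 : ℝ) = evalAtPhiX B φ x - const (evalAtPhiX B φ) 0 x
    show (0 : ℝ) = evalAtPhiX B φ x - (if (0:ℤ) = 0 then evalAtPhiX B φ else 0) x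
    rw [if_pos rfl]
    ring
  · -- n ≥ 1
    have h1 : truncGe 1 (sh (pd 0 φ) B) n x = sh (pd 0 φ) B n x := by
      show (if (1:ℤ) ≤ n then sh (pd 0 φ) B n else 0) x = _
      rw [if_pos (by omega : (1:ℤ) ≤ n)]
    have h2 : const (evalAtPhiX B φ) n x = 0 := by
      show (if n = 0 then evalAtPhiX B φ else 0) x = 0
      rw [if_neg (by omega : ¬ n = 0)]
      rfl
    rw [h1, h2]
    have h3 : sh (pd 0 φ) (truncGe 0 B) n x = sh (pd 0 φ) B n x := by
      apply tsum_congr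
      intro k
      have : truncGe 0 B (n + k) = B (n + k) := by
        show (if (0:ℤ) ≤ n + k then B (n + k) else 0) = B (n + k)
        rw [if_pos (by omega : (0:ℤ) ≤ n + (k:ℤ))]
      rw [this]
    rw [h3]
    ring

lemma Bd_fm {A : Coeffs N} {a : ℤ} (hA : Bd A a) (f : (Fin N → ℝ) → ℝ) : Bd (fm f A) a := by
  intro n hn
  funext x
  show f x * A n x = 0
  rw [hA.ap hn x, mul_zero]

lemma mul_add_left {A B C : Coeffs N} {a b c : ℤ} (hA : Bd A a) (hB : Bd B b) (hC : Bd C c) :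
    mul (fun n x => A n x + B n x) C = fun n x => mul A C n x + mul B C n x := by
  funext n x
  show (∑' i : ℤ, (A i x + B i x) * C (n - i) x) = _
  rw [show (fun i : ℤ => (A i x + B i x) * C (n - i) x)
      = fun i => A i x * C (n - i) x + B i x * C (n - i) x by funext i; ring]
  exact Summable.tsum_add (summable_mul hA hC n x) (summable_mul hB hC n x)

/-- the Poisson bracket transforms canonically under `sh` -/
lemma pb_sh {A B : Coeffs N} {a b : ℤ} (hA : Bd A a) (hB : Bd B b)
    (sA : SmC A) (sB : SmC B) {c : (Fin N → ℝ) → ℝ} (hc : Sm c) :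
    pb (sh c A) (sh c B) = sh c (pb A B) := by
  have hdxB : dT 0 (sh c B) = fun n x => sh c (dT 0 B) n x + fm (pd 0 c) (sh c (dP B)) n x :=
    sh_dT hB sB hc 0
  have hdxA : dT 0 (sh c A) = fun n x => sh c (dT 0 A) n x + fm (pd 0 c) (sh c (dP A)) n x :=
    sh_dT hA sA hc 0
  funext n x
  show mul (dP (sh c A)) (dT 0 (sh c B)) n x - mul (dT 0 (sh c A)) (dP (sh c B)) n x
      = sh c (pb A B) n x
  rw [← sh_dP c A, ← sh_dP c B, hdxB, hdxA]
  rw [mul_add_right (Bd_sh (Bd_dP hA) c) (Bd_sh (Bd_dT hB 0) c)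
    (Bd_fm (Bd_sh (Bd_dP hB) c) (pd 0 c))]
  rw [mul_add_left (Bd_sh (Bd_dT hA 0) c) (Bd_fm (Bd_sh (Bd_dP hA) c) (pd 0 c))
    (Bd_sh (Bd_dP hB) c)]
  rw [mul_fm_right, mul_fm_left]
  rw [← sh_mul (Bd_dP hA) (Bd_dT hB 0) c, ← sh_mul (Bd_dT hA 0) (Bd_dP hB) c,
    ← sh_mul (Bd_dP hA) (Bd_dP hB) c]
  have hpb : sh c (pb A B) n x = sh c (mul (dP A) (dT 0 B)) n x
      - sh c (mul (dT 0 A) (dP B)) n x := by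
    have h := sh_sub (Bd_mul (Bd_dP hA) (Bd_dT hB 0)) (Bd_mul (Bd_dT hA 0) (Bd_dP hB)) c
    exact congrFun (congrFun h n) x
  rw [hpb]
  ring

/-- subtraction in the first argument of the Poisson bracket -/
lemma pb_sub_left {X Y Z : Coeffs N} {mx my mz : ℤ} (hX : Bd X mx) (hY : Bd Y my)
    (hZ : Bd Z mz) (sX : SmC X) (sY : SmC Y) :
    pb (fun n x => X n x - Y n x) Z
      = fun n x => pb X Z n x - pb Y Z n x := by
  funext n x
  show mul (dP fun n x => X n x - Y n x) (dT 0 Z) n x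
      - mul (dT 0 fun n x => X n x - Y n x) (dP Z) n x = _
  rw [dP_sub X Y, dT_sub sX sY 0]
  rw [mul_sub_left (Bd_dP hX) (Bd_dP hY) (Bd_dT hZ 0)]
  rw [mul_sub_left (Bd_dT hX 0) (Bd_dT hY 0) (Bd_dP hZ)]
  show mul (dP X) (dT 0 Z) n x - mul (dP Y) (dT 0 Z) n x
      - (mul (dT 0 X) (dP Z) n x - mul (dT 0 Y) (dP Z) n x)
      = mul (dP X) (dT 0 Z) n x - mul (dT 0 X) (dP Z) n x
      - (mul (dP Y) (dT 0 Z) n x - mul (dT 0 Y) (dP Z) n x)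
  ring

end Aux8
/-- Corollary 4, the dispersionless Miura map: if `λ` solves the dKP hierarchy
`∂_{T_q}λ = {(λ^q)_+, λ}` and `φ` satisfies `∂_{T_q}φ = (λ^q)_+|_{P=φ_X}`, then
`μ = e^{-ad φ}λ` solves the dmKP hierarchy `∂_{T_q}μ = {(μ^q)_{≥1}, μ}`
(here `q : Fin N` labels the time `T_{q+1}`, paired with the exponent `q+1`). -/
theorem statement5 {N : ℕ} [NeZero N] (lam : Coeffs N) (hshape : IsDKPShape lam)
    (hlam : IsLaurent lam)
    (hdkp : ∀ q : Fin N, dT q lam = pb (truncGe 0 (powC lam ((q : ℕ) + 1))) lam)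
    (φ : (Fin N → ℝ) → ℝ) (hφ : ContDiff ℝ (⊤ : ℕ∞) φ)
    (hφeq : ∀ q : Fin N, pd q φ = evalAtPhiX (powC lam ((q : ℕ) + 1)) φ) :
    ∀ q : Fin N, dT q (expAdNeg φ lam)
      = pb (truncGe 1 (powC (expAdNeg φ lam) ((q : ℕ) + 1))) (expAdNeg φ lam) := by
  intro q
  have hμ : expAdNeg φ lam = sh (pd 0 φ) lam := expAdNeg_eq_sh φ lam
  rw [hμ]
  have hBd : Bd lam 1 := by
    intro n hn; exact hshape.2.2 n (by omega)
  have hSm : SmC lam := hlam.2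
  have hc_sm : Sm (pd 0 φ) := pd_smooth hφ 0
  have hBdB : Bd (powC lam ((q : ℕ) + 1)) (((q : ℕ) + 1 : ℕ) : ℤ) := Bd_powC hBd _
  have hSmB : SmC (powC lam ((q : ℕ) + 1)) := SmC_powC hBd hSm _
  have hpow : powC (sh (pd 0 φ) lam) ((q : ℕ) + 1) = sh (pd 0 φ) (powC lam ((q : ℕ) + 1)) :=
    (sh_powC hBd (pd 0 φ) _).symm
  rw [hpow, trunc_sh hBdB φ]
  rw [pb_sub_left (Bd_sh (Bd_truncGe hBdB 0 le_rfl) (pd 0 φ))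
    (Bd_const' _ (((q : ℕ) + 1 : ℕ) : ℤ) (by positivity)) (Bd_sh hBd (pd 0 φ))
    (SmC_sh (Bd_truncGe hBdB 0 le_rfl) hc_sm (SmC_truncGe hSmB 0))
    (SmC_const ((hφeq q) ▸ pd_smooth hφ q))]
  rw [pb_const (sh (pd 0 φ) lam)]
  rw [pb_sh (Bd_truncGe hBdB 0 le_rfl) hBd (SmC_truncGe hSmB 0) hSm hc_sm]
  rw [← hdkp q]
  rw [sh_dT hBd hSm hc_sm q]
  funext n x
  have h1 : pd q (pd 0 φ) = pd 0 (evalAtPhiX (powC lam ((q : ℕ) + 1)) φ) := by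
    rw [← hφeq q]
    exact pd_comm hφ q 0
  have h2 : sh (pd 0 φ) (dP lam) = dP (sh (pd 0 φ) lam) := sh_dP (pd 0 φ) lam
  simp only [h1, h2]
  ring

end DMKP
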